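/- Let ψ be a tensor with rank(ψ) = q, and suppose ψ satisfies the regularity condition: there exists a CP decomposition ψ = Σ_{k=1}^q ψ^k into rank-1 tensors ψ^k such that ‖ψ^k‖_max ≤ ‖ψ‖_max for every k ∈ [q]. Then ‖ψ‖_max ≤ ‖ψ‖_± ≤ q·‖ψ‖_max. -/
import Mathlib


open Set Pointwise

noncomputable section

/-- The set `B_λ` of rank-1 tensors whose factor entries lie in `[-1,1]`, scaled by `λ`. -/
def setB (p : ℕ) (r : Fin p → ℕ) (lam : ℝ) :
    Set (((i : Fin p) → Fin (r i)) → ℝ) :=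
  {ψ | ∃ θ : (k : Fin p) → Fin (r k) → ℝ,
    (∀ k j, -1 ≤ θ k j ∧ θ k j ≤ 1) ∧
    ∀ x, ψ x = lam * ∏ k, θ k (x k)}

/-- The set `S_λ` of rank-1 tensors whose factor entries lie in `{-1,1}`, scaled by `λ`. -/
def setS (p : ℕ) (r : Fin p → ℕ) (lam : ℝ) :
    Set (((i : Fin p) → Fin (r i)) → ℝ) :=
  {ψ | ∃ θ : (k : Fin p) → Fin (r k) → ℝ,
    (∀ k j, θ k j = -1 ∨ θ k j = 1) ∧
    ∀ x, ψ x = lam * ∏ k, θ k (x k)}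

/-- `C_λ := conv(S_λ)`. -/
def setC (p : ℕ) (r : Fin p → ℕ) (lam : ℝ) :
    Set (((i : Fin p) → Fin (r i)) → ℝ) :=
  convexHull ℝ (setS p r lam)

/-- The gauge norm `‖ψ‖_± = inf {λ ≥ 0 : ψ ∈ λ • C_1}`. -/
def gaugeNorm {p : ℕ} {r : Fin p → ℕ} (ψ : ((i : Fin p) → Fin (r i)) → ℝ) : ℝ :=
  sInf {lam : ℝ | 0 ≤ lam ∧ ψ ∈ lam • setC p r 1}

/-- The max norm `‖ψ‖_max = max_x |ψ_x|`. -/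
def maxNorm {p : ℕ} {r : Fin p → ℕ} (ψ : ((i : Fin p) → Fin (r i)) → ℝ) : ℝ :=
  ⨆ x, |ψ x|

/-- A rank-1 tensor: an outer product of vectors. -/
def IsRankOne {p : ℕ} {r : Fin p → ℕ} (ψ : ((i : Fin p) → Fin (r i)) → ℝ) : Prop :=
  ∃ θ : (k : Fin p) → Fin (r k) → ℝ, ∀ x, ψ x = ∏ k, θ k (x k)

section Aux

variable {p : ℕ} {r : Fin p → ℕ}

/-- multilinear "box in convex hull of signs" lemma -/
lemma mem_box_convexHull (lam : ℝ) :
    ∀ (n : ℕ) (θ : (k : Fin p) → Fin (r k) → ℝ),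
      ((Finset.univ : Finset ((k : Fin p) × Fin (r k))).filter
        (fun kj => θ kj.1 kj.2 ≠ -1 ∧ θ kj.1 kj.2 ≠ 1)).card ≤ n →
      (∀ k j, -1 ≤ θ k j ∧ θ k j ≤ 1) →
      (fun x => lam * ∏ k, θ k (x k)) ∈ convexHull ℝ (setS p r lam) := by
  intro n
  induction n with
  | zero =>
      intro θ hcard hθ
      apply subset_convexHull
      refine ⟨θ, ?_, fun x => rfl⟩
      intro k j
      by_contra h
      push_neg at h
      have hmem : (⟨k, j⟩ : (k : Fin p) × Fin (r k)) ∈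
          (Finset.univ : Finset ((k : Fin p) × Fin (r k))).filter
            (fun kj => θ kj.1 kj.2 ≠ -1 ∧ θ kj.1 kj.2 ≠ 1) :=
        Finset.mem_filter.mpr ⟨Finset.mem_univ _, h⟩
      have := Finset.card_pos.mpr ⟨_, hmem⟩
      omega
  | succ n ih =>
      intro θ hcard hθ
      by_cases hle : ((Finset.univ : Finset ((k : Fin p) × Fin (r k))).filter
          (fun kj => θ kj.1 kj.2 ≠ -1 ∧ θ kj.1 kj.2 ≠ 1)).card ≤ n
      · exact ih θ hle hθ
      have hpos : 0 < ((Finset.univ : Finset ((k : Fin p) × Fin (r k))).filter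
          (fun kj => θ kj.1 kj.2 ≠ -1 ∧ θ kj.1 kj.2 ≠ 1)).card := by omega
      obtain ⟨⟨k₀, j₀⟩, hmem⟩ := Finset.card_pos.mp hpos
      have hns : θ k₀ j₀ ≠ -1 ∧ θ k₀ j₀ ≠ 1 := (Finset.mem_filter.mp hmem).2
      -- the two sign-substituted tensors
      set θp := Function.update θ k₀ (Function.update (θ k₀) j₀ 1) with hθp
      set θm := Function.update θ k₀ (Function.update (θ k₀) j₀ (-1)) with hθm
      have hupd : ∀ (w : ℝ) (k : Fin p) (j : Fin (r k)),
          (⟨k, j⟩ : (k : Fin p) × Fin (r k)) ≠ ⟨k₀, j₀⟩ →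
          Function.update θ k₀ (Function.update (θ k₀) j₀ w) k j = θ k j := by
        intro w k j hne
        rcases eq_or_ne k k₀ with hk | hk
        · subst hk
          rw [Function.update_self]
          have hj : j ≠ j₀ := by
            intro hj; exact hne (by rw [hj])
          rw [Function.update_of_ne hj]
        · rw [Function.update_of_ne hk]
      have hcard' : ∀ (w : ℝ), w = -1 ∨ w = 1 →
          ((Finset.univ : Finset ((k : Fin p) × Fin (r k))).filter
            (fun kj => Function.update θ k₀ (Function.update (θ k₀) j₀ w) kj.1 kj.2 ≠ -1 ∧
              Function.update θ k₀ (Function.update (θ k₀) j₀ w) kj.1 kj.2 ≠ 1)).card ≤ n := by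
        intro w hw
        have hsub : ((Finset.univ : Finset ((k : Fin p) × Fin (r k))).filter
            (fun kj => Function.update θ k₀ (Function.update (θ k₀) j₀ w) kj.1 kj.2 ≠ -1 ∧
              Function.update θ k₀ (Function.update (θ k₀) j₀ w) kj.1 kj.2 ≠ 1)) ⊆
            ((Finset.univ : Finset ((k : Fin p) × Fin (r k))).filter
              (fun kj => θ kj.1 kj.2 ≠ -1 ∧ θ kj.1 kj.2 ≠ 1)).erase ⟨k₀, j₀⟩ := by
          intro kj hkj
          obtain ⟨k, j⟩ := kj
          have h2 := (Finset.mem_filter.mp hkj).2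
          have hne : (⟨k, j⟩ : (k : Fin p) × Fin (r k)) ≠ ⟨k₀, j₀⟩ := by
            intro he
            rw [he] at h2
            simp only [Function.update_self] at h2
            rcases hw with hw | hw <;> simp [hw] at h2
          rw [hupd w k j hne] at h2
          exact Finset.mem_erase.mpr ⟨hne, Finset.mem_filter.mpr ⟨Finset.mem_univ _, h2⟩⟩
        have := Finset.card_le_card hsub
        rw [Finset.card_erase_of_mem hmem] at this
        omega
      have hθ' : ∀ (w : ℝ), -1 ≤ w → w ≤ 1 → ∀ (k : Fin p) (j : Fin (r k)),
          -1 ≤ Function.update θ k₀ (Function.update (θ k₀) j₀ w) k j ∧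
          Function.update θ k₀ (Function.update (θ k₀) j₀ w) k j ≤ 1 := by
        intro w hw1 hw2 k j
        by_cases hne : (⟨k, j⟩ : (k : Fin p) × Fin (r k)) = ⟨k₀, j₀⟩
        · cases hne
          simp only [Function.update_self]
          exact ⟨hw1, hw2⟩
        · rw [hupd w k j hne]; exact hθ k j
      have h1 := ih θp (hcard' 1 (Or.inr rfl)) (hθ' 1 (by norm_num) le_rfl)
      have h2 := ih θm (hcard' (-1) (Or.inl rfl)) (hθ' (-1) le_rfl (by norm_num))
      have key : ∀ (v : Fin (r k₀) → ℝ) (x : (i : Fin p) → Fin (r i)),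
          ∏ k, (Function.update θ k₀ v) k (x k) =
            v (x k₀) * ∏ k ∈ Finset.univ.erase k₀, θ k (x k) := by
        intro v x
        rw [← Finset.mul_prod_erase Finset.univ _ (Finset.mem_univ k₀)]
        congr 1
        · rw [Function.update_self]
        · exact Finset.prod_congr rfl fun k hk => by
            rw [Function.update_of_ne (Finset.ne_of_mem_erase hk)]
      set t := (θ k₀ j₀ + 1) / 2 with ht
      have ht0 : 0 ≤ t := by
        have := (hθ k₀ j₀).1; rw [ht]; linarith
      have ht1 : 0 ≤ 1 - t := by
        have := (hθ k₀ j₀).2; rw [ht]; linarith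
      have heq : (fun x => lam * ∏ k, θ k (x k)) =
          t • (fun x : (i : Fin p) → Fin (r i) => lam * ∏ k, θp k (x k)) +
            (1 - t) • (fun x : (i : Fin p) → Fin (r i) => lam * ∏ k, θm k (x k)) := by
        funext x
        simp only [Pi.add_apply, Pi.smul_apply, smul_eq_mul]
        rw [hθp, hθm, key, key,
          ← Finset.mul_prod_erase Finset.univ (fun k => θ k (x k)) (Finset.mem_univ k₀)]
        by_cases hx : x k₀ = j₀
        · rw [hx, Function.update_self, Function.update_self, ht]
          ring
        · rw [Function.update_of_ne hx, Function.update_of_ne hx]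
          ring
      rw [heq]
      exact (convex_convexHull ℝ (setS p r lam)) h1 h2 ht0 ht1 (by ring)


variable {p : ℕ} {r : Fin p → ℕ}

lemma abs_apply_le_maxNorm (ψ : ((i : Fin p) → Fin (r i)) → ℝ)
    (x : (i : Fin p) → Fin (r i)) : |ψ x| ≤ maxNorm ψ := by
  exact le_ciSup (f := fun y => |ψ y|) (Set.Finite.bddAbove (Set.finite_range _)) x

lemma maxNorm_nonneg (hr : ∀ i, 1 ≤ r i) (ψ : ((i : Fin p) → Fin (r i)) → ℝ) :
    0 ≤ maxNorm ψ :=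
  le_trans (abs_nonneg _) (abs_apply_le_maxNorm ψ (fun i => ⟨0, hr i⟩))

lemma abs_le_one_of_mem_setC {φ : ((i : Fin p) → Fin (r i)) → ℝ}
    (hφ : φ ∈ setC p r 1) (x : (i : Fin p) → Fin (r i)) : |φ x| ≤ 1 := by
  have hsub : setS p r 1 ⊆ {χ : ((i : Fin p) → Fin (r i)) → ℝ | ∀ y, |χ y| ≤ 1} := by
    rintro χ ⟨θ, hθ, hχ⟩ y
    rw [hχ y, one_mul, Finset.abs_prod]
    calc ∏ k, |θ k (y k)| = ∏ k, (1 : ℝ) := by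
          refine Finset.prod_congr rfl fun k _ => ?_
          rcases hθ k (y k) with h | h <;> rw [h] <;> norm_num
      _ = 1 := by simp
      _ ≤ 1 := le_rfl
  have hconv : Convex ℝ {χ : ((i : Fin p) → Fin (r i)) → ℝ | ∀ y, |χ y| ≤ 1} := by
    intro χ₁ h₁ χ₂ h₂ a b ha hb hab y
    have : (a • χ₁ + b • χ₂) y = a * χ₁ y + b * χ₂ y := rfl
    rw [this]
    calc |a * χ₁ y + b * χ₂ y| ≤ |a * χ₁ y| + |b * χ₂ y| := abs_add_le _ _
      _ = a * |χ₁ y| + b * |χ₂ y| := by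
          rw [abs_mul, abs_mul, abs_of_nonneg ha, abs_of_nonneg hb]
      _ ≤ a * 1 + b * 1 :=
          add_le_add (mul_le_mul_of_nonneg_left (h₁ y) ha)
            (mul_le_mul_of_nonneg_left (h₂ y) hb)
      _ = 1 := by rw [mul_one, mul_one, hab]
  exact convexHull_min hsub hconv hφ x

/-- normalization of a rank-1 tensor -/
lemma rankOne_mem (hp : 1 ≤ p) (hr : ∀ i, 1 ≤ r i) {φ : ((i : Fin p) → Fin (r i)) → ℝ}
    (h1 : IsRankOne φ) {M : ℝ} (hM : 0 < M) (hφM : maxNorm φ ≤ M) :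
    M⁻¹ • φ ∈ convexHull ℝ (setS p r 1) := by
  obtain ⟨θ, hθ⟩ := h1
  have hne : ∀ k : Fin p, (Finset.univ : Finset (Fin (r k))).Nonempty :=
    fun k => ⟨⟨0, hr k⟩, Finset.mem_univ _⟩
  set a : Fin p → ℝ := fun k => (Finset.univ.sup' (hne k) fun j => |θ k j|) with ha
  have hale : ∀ (k : Fin p) (j : Fin (r k)), |θ k j| ≤ a k := by
    intro k j
    simp only [ha]
    exact Finset.le_sup' (fun j => |θ k j|) (Finset.mem_univ j)
  have ha0 : ∀ k, 0 ≤ a k := fun k => le_trans (abs_nonneg _) (hale k ⟨0, hr k⟩)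
  -- a point attaining the max in each coordinate
  have hex : ∀ k : Fin p, ∃ j : Fin (r k), a k = |θ k j| := by
    intro k
    obtain ⟨j, _, hj⟩ := Finset.exists_mem_eq_sup' (hne k) fun j => |θ k j|
    exact ⟨j, hj⟩
  choose xs hxs using hex
  have hAle : ∏ k, a k ≤ M := by
    have h1 : ∏ k, a k = |φ xs| := by
      rw [hθ xs, Finset.abs_prod]
      exact Finset.prod_congr rfl fun k _ => hxs k
    rw [h1]
    exact le_trans (abs_apply_le_maxNorm φ xs) hφM
  by_cases hz : ∃ k, a k = 0
  · -- φ = 0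
    obtain ⟨k₀, hk₀⟩ := hz
    have hφ0 : ∀ x, φ x = 0 := by
      intro x
      rw [hθ x]
      refine Finset.prod_eq_zero (Finset.mem_univ k₀) ?_
      have := hale k₀ (x k₀)
      rw [hk₀] at this
      exact abs_eq_zero.mp (le_antisymm this (abs_nonneg _))
    have hmem := mem_box_convexHull (p := p) (r := r) 1 (Fintype.card ((k : Fin p) × Fin (r k)))
      (fun k _ => if k = ⟨0, hp⟩ then 0 else 1)
      (le_trans (Finset.card_le_card (Finset.filter_subset _ _)) (by simp))
      (by intro k j; split <;> norm_num)
    have hfun : M⁻¹ • φ =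
        (fun x : (i : Fin p) → Fin (r i) =>
          1 * ∏ k, (fun (k : Fin p) (_ : Fin (r k)) => if k = ⟨0, hp⟩ then (0:ℝ) else 1) k (x k)) := by
      funext x
      have : ∏ k, (fun (k : Fin p) (_ : Fin (r k)) => if k = ⟨0, hp⟩ then (0:ℝ) else 1) k (x k)
          = 0 := Finset.prod_eq_zero (Finset.mem_univ ⟨0, hp⟩) (by simp)
      rw [this]
      simp [hφ0 x]
    rw [hfun]
    exact hmem
  · push_neg at hz
    have hapos : ∀ k, 0 < a k := fun k => lt_of_le_of_ne (ha0 k) (Ne.symm (hz k))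
    have hApos : 0 < ∏ k, a k := Finset.prod_pos fun k _ => hapos k
    set A := ∏ k, a k with hA
    set c : ℝ := A / M with hc
    have hc0 : 0 < c := div_pos hApos hM
    have hc1 : c ≤ 1 := (div_le_one hM).mpr hAle
    set k₀ : Fin p := ⟨0, hp⟩ with hk₀
    set θ' : (k : Fin p) → Fin (r k) → ℝ :=
      fun k j => (if k = k₀ then c else 1) * (θ k j / a k) with hθ'
    have hθ'bd : ∀ k j, -1 ≤ θ' k j ∧ θ' k j ≤ 1 := by
      intro k j
      rw [← abs_le, hθ', abs_mul, abs_div]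
      have h1 : |if k = k₀ then c else 1| ≤ 1 := by
        split
        · rw [abs_of_pos hc0]; exact hc1
        · norm_num
      have h2 : |θ k j| / |a k| ≤ 1 := by
        rw [abs_of_pos (hapos k)]
        exact (div_le_one (hapos k)).mpr (hale k j)
      calc |if k = k₀ then c else 1| * (|θ k j| / |a k|) ≤ 1 * 1 := by
            apply mul_le_mul h1 h2 (by positivity) zero_le_one
        _ = 1 := by norm_num
    have hmem := mem_box_convexHull (p := p) (r := r) 1 (Fintype.card ((k : Fin p) × Fin (r k)))
      θ' (le_trans (Finset.card_le_card (Finset.filter_subset _ _)) (by simp)) hθ'bd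
    have hfun : M⁻¹ • φ = (fun x : (i : Fin p) → Fin (r i) => 1 * ∏ k, θ' k (x k)) := by
      funext x
      rw [one_mul]
      have hprod : ∏ k, θ' k (x k) =
          (∏ k, (if k = k₀ then c else 1)) * ((∏ k, θ k (x k)) / ∏ k, a k) := by
        rw [hθ', ← Finset.prod_div_distrib, ← Finset.prod_mul_distrib]
      have hcprod : (∏ k : Fin p, (if k = k₀ then c else 1)) = c := by
        rw [Finset.prod_ite_eq' Finset.univ k₀ (fun _ => c)]
        simp
      rw [hprod, hcprod, ← hA, hc, ← hθ x]
      have : (M⁻¹ • φ) x = M⁻¹ * φ x := rfl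
      rw [this]
      field_simp
    rw [hfun]
    exact hmem

end Aux

/-- if `rank(ψ) = q` and `ψ` admits a CP decomposition into `q` rank-1
terms each of whose max norm is at most `‖ψ‖_max` (the regularity condition), then
`‖ψ‖_max ≤ ‖ψ‖_± ≤ q·‖ψ‖_max`. -/
theorem gaugeNorm_between_maxNorm_and_rank_mul_maxNorm (p : ℕ) (hp : 1 ≤ p)
    (r : Fin p → ℕ) (hr : ∀ i, 1 ≤ r i) (ψ : ((i : Fin p) → Fin (r i)) → ℝ) (q : ℕ)
    (hrank : IsLeast {m : ℕ | ∃ ψk : Fin m → ((i : Fin p) → Fin (r i)) → ℝ,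
      (∀ k, IsRankOne (ψk k)) ∧ ψ = ∑ k, ψk k} q)
    (hreg : ∃ ψk : Fin q → ((i : Fin p) → Fin (r i)) → ℝ,
      (∀ k, IsRankOne (ψk k)) ∧ ψ = ∑ k, ψk k ∧ ∀ k, maxNorm (ψk k) ≤ maxNorm ψ) :
    maxNorm ψ ≤ gaugeNorm ψ ∧ gaugeNorm ψ ≤ q * maxNorm ψ := by
  haveI : Nonempty ((i : Fin p) → Fin (r i)) := ⟨fun i => ⟨0, hr i⟩⟩
  obtain ⟨ψk, hrk1, hsum, hbd⟩ := hreg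
  set M := maxNorm ψ with hMdef
  have hM0 : 0 ≤ M := maxNorm_nonneg hr ψ
  set G : Set ℝ := {lam : ℝ | 0 ≤ lam ∧ ψ ∈ lam • setC p r 1} with hG
  have hGbdd : BddBelow G := ⟨0, fun b hb => hb.1⟩
  -- lower-bound machinery: any member of G dominates maxNorm ψ
  have hlow : ∀ lam ∈ G, M ≤ lam := by
    rintro lam ⟨hlam0, hmem⟩
    obtain ⟨c, hc, hcm⟩ := Set.mem_smul_set.mp hmem
    have : ∀ x, |ψ x| ≤ lam := by
      intro x
      rw [← hcm]
      have : |(lam • c) x| = lam * |c x| := by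
        have : (lam • c) x = lam * c x := rfl
        rw [this, abs_mul, abs_of_nonneg hlam0]
      rw [this]
      calc lam * |c x| ≤ lam * 1 :=
            mul_le_mul_of_nonneg_left (abs_le_one_of_mem_setC hc x) hlam0
        _ = lam := mul_one lam
    exact ciSup_le this
  rcases eq_or_lt_of_le hM0 with hMeq | hMpos
  · -- M = 0 : ψ = 0
    have hψ0 : ψ = 0 := by
      funext x
      have h1 : |ψ x| ≤ 0 := by rw [hMeq]; exact abs_apply_le_maxNorm ψ x
      have := abs_nonneg (ψ x)
      simpa using abs_eq_zero.mp (le_antisymm h1 this)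
    have hone : (fun _ : (i : Fin p) → Fin (r i) => (1:ℝ)) ∈ setC p r 1 := by
      apply subset_convexHull
      exact ⟨fun _ _ => 1, fun k j => Or.inr rfl, fun x => by simp⟩
    have h0G : (0:ℝ) ∈ G := by
      refine ⟨le_rfl, Set.mem_smul_set.mpr ⟨_, hone, ?_⟩⟩
      rw [hψ0, zero_smul]
    have hg : gaugeNorm ψ = 0 := by
      rw [gaugeNorm]
      exact le_antisymm (csInf_le hGbdd h0G) (le_csInf ⟨0, h0G⟩ fun b hb => hb.1)
    constructor
    · rw [hg]; exact hMeq.ge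
    · rw [hg]; exact mul_nonneg (Nat.cast_nonneg q) hM0
  · -- M > 0 : q ≠ 0
    have hq0 : q ≠ 0 := by
      intro hq
      subst hq
      have : ψ = 0 := by rw [hsum]; simp
      have : M = 0 := by
        rw [hMdef, this, maxNorm]
        have : Nonempty ((i : Fin p) → Fin (r i)) := ⟨fun i => ⟨0, hr i⟩⟩
        simp [ciSup_const]
      exact absurd this (ne_of_gt hMpos)
    have hqpos : (0:ℝ) < (q:ℝ) := by exact_mod_cast Nat.pos_of_ne_zero hq0
    -- each (1/M) ψk is in conv S₁
    have hmemk : ∀ k : Fin q, M⁻¹ • ψk k ∈ convexHull ℝ (setS p r 1) :=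
      fun k => rankOne_mem hp hr (hrk1 k) hMpos (hbd k)
    -- the convex combination
    have hcomb : (∑ k : Fin q, (q:ℝ)⁻¹ • (M⁻¹ • ψk k)) ∈ setC p r 1 := by
      rw [setC]
      refine Convex.sum_mem (convex_convexHull ℝ _) (fun k _ => by positivity) ?_
        (fun k _ => hmemk k)
      rw [Finset.sum_const]
      simp only [Finset.card_univ, Fintype.card_fin, nsmul_eq_mul]
      field_simp
    have hqM : (q:ℝ) * M ∈ G := by
      refine ⟨mul_nonneg (Nat.cast_nonneg q) hM0, Set.mem_smul_set.mpr ⟨_, hcomb, ?_⟩⟩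
      rw [Finset.smul_sum]
      rw [hsum]
      refine Finset.sum_congr rfl fun k _ => ?_
      rw [smul_smul, smul_smul]
      have h1 : (q:ℝ) * M * (q:ℝ)⁻¹ * M⁻¹ = 1 := by
        field_simp
      rw [h1, one_smul]
    constructor
    · exact le_csInf ⟨_, hqM⟩ hlow
    · exact csInf_le hGbdd hqM
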